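/- arXiv:2106.00989 — 5 statements merged into one kernel-verified Lean document; each statement's English description precedes it below -/
import Mathlib

section
/- Let A be a ℂ-vector space with a countably infinite basis, and let μ, ν : A* → A be ℂ-linear maps from the full dual A* to A such that α(μ(β)) = β(ν(α)) for all α, β ∈ A*. Then the ranges of μ and ν are finite-dimensional and dim(range μ) = dim(range ν). -/
/-!
Dualising `f : A* → A` turns the pairing identity into `f* = ev ∘ g`, and since the evaluation map
`A → A**` is injective, `range g ≅ range f* = (ker f)^⊥ ≅ (range f)*`. If `range f` were
infinite-dimensional, the Erdős–Kaplansky theorem would make `dim range g > dim range f`, and by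
symmetry `dim range f > dim range g`. So both ranges are finite-dimensional, and then
`(range f)* ≅ range f` gives equal dimensions.
-/

open Cardinal Module LinearMap

universe u v

variable {K : Type u} {V : Type v} [Field K] [AddCommGroup V] [Module K V]

lemma dualMap_eq_eval_comp_of_pairing {f g : Dual K V →ₗ[K] V}
    (h : ∀ α β : Dual K V, α (f β) = β (g α)) :
    f.dualMap = (Dual.eval K V).comp g := by
  ext α β
  simp [dualMap_apply, h]

lemma rank_range_eq_rank_dual_range_of_pairing {f g : Dual K V →ₗ[K] V}
    (h : ∀ α β : Dual K V, α (f β) = β (g α)) :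
    lift.{u} (Module.rank K (range g)) = Module.rank K (Dual K (range f)) := calc
  lift.{u} (Module.rank K (range g)) = Module.rank K ((range g).map (Dual.eval K V)) := by
    have hlift : lift.{max u v, v} = lift.{u, v} := lift_umax.{v, u}
    have := (Submodule.equivMapOfInjective _ (eval_apply_injective K (V := V)) (range g)).lift_rank_eq
    rwa [hlift, lift_id'.{v, u}] at this
  _ = Module.rank K (ker f).dualAnnihilator := by
    rw [← range_comp, ← dualMap_eq_eval_comp_of_pairing h,
      range_dualMap_eq_dualAnnihilator_ker]
  _ = Module.rank K (Dual K (range f)) :=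
    (f.quotKerEquivRange.dualMap.trans (Submodule.dualQuotEquivDualAnnihilator _)).rank_eq.symm

lemma rank_range_lt_aleph0_of_pairing {f g : Dual K V →ₗ[K] V}
    (h : ∀ α β : Dual K V, α (f β) = β (g α)) :
    Module.rank K (range f) < ℵ₀ := by
  by_contra! hf
  have hfg : Module.rank K (range f) < Module.rank K (range g) := by
    simpa [← rank_range_eq_rank_dual_range_of_pairing h] using lift_rank_lt_rank_dual hf
  have hgf : Module.rank K (range g) < Module.rank K (range f) := by
    simpa [← rank_range_eq_rank_dual_range_of_pairing fun α β => (h β α).symm] using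
      lift_rank_lt_rank_dual (hf.trans hfg.le)
  exact (hfg.trans hgf).false

lemma rank_range_eq_of_pairing {f g : Dual K V →ₗ[K] V}
    (h : ∀ α β : Dual K V, α (f β) = β (g α)) :
    Module.rank K (range g) = Module.rank K (range f) := by
  have : FiniteDimensional K (range f) :=
    rank_lt_aleph0_iff.mp (rank_range_lt_aleph0_of_pairing h)
  simpa [Module.dual_rank_eq] using rank_range_eq_rank_dual_range_of_pairing h

theorem stmt0_general (A : Type*) [AddCommGroup A] [Module ℂ A]
    (μ ν : Module.Dual ℂ A →ₗ[ℂ] A)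
    (h : ∀ α β : Module.Dual ℂ A, α (μ β) = β (ν α)) :
    FiniteDimensional ℂ (LinearMap.range μ) ∧
    FiniteDimensional ℂ (LinearMap.range ν) ∧
    Module.finrank ℂ (LinearMap.range μ) = Module.finrank ℂ (LinearMap.range ν) :=
  ⟨rank_lt_aleph0_iff.mp (rank_range_lt_aleph0_of_pairing h),
    rank_lt_aleph0_iff.mp (rank_range_lt_aleph0_of_pairing fun α β => (h β α).symm),
    congrArg Cardinal.toNat (rank_range_eq_of_pairing h).symm⟩

/-- Let `A` be a `ℂ`-vector space with a countably infinite basis, and let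
`μ, ν : A* → A` be `ℂ`-linear maps from the full dual `A*` to `A` such that
`α(μ(β)) = β(ν(α))` for all `α, β ∈ A*`.  Then the ranges of `μ` and `ν` are
finite-dimensional, of the same dimension. -/
theorem stmt0 (A : Type*) [AddCommGroup A] [Module ℂ A] (b : Module.Basis ℕ ℂ A)
    (μ ν : Module.Dual ℂ A →ₗ[ℂ] A)
    (h : ∀ α β : Module.Dual ℂ A, α (μ β) = β (ν α)) :
    FiniteDimensional ℂ (LinearMap.range μ) ∧
    FiniteDimensional ℂ (LinearMap.range ν) ∧
    Module.finrank ℂ (LinearMap.range μ) = Module.finrank ℂ (LinearMap.range ν) :=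
  stmt0_general A μ ν h
end

section
/- Let κ be a ℂ-linear automorphism of V = (ℕ→₀ℂ) × (ℕ→₀ℂ) that fixes all but finitely many of the standard basis vectors (δ_i,0), (0,δ_i), i ∈ ℕ. Then there exists a unique pair (κ̂, κ̄) ∈ G(T,R) such that κ̂ restricts to κ on V ⊆ T; moreover d(κ̂) = 0. -/
open Module Submodule

noncomputable section

abbrev TT : Type := (ℕ → ℂ) × (ℕ →₀ ℂ)
abbrev RR : Type := (ℕ →₀ ℂ) × (ℕ → ℂ)

lemma lc_v_add (v w : ℕ → ℂ) (l : ℕ →₀ ℂ) :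
    Finsupp.linearCombination ℂ (v + w) l
      = Finsupp.linearCombination ℂ v l + Finsupp.linearCombination ℂ w l := by
  classical
  simp only [Finsupp.linearCombination_apply]
  rw [← Finsupp.sum_add]
  exact Finsupp.sum_congr fun i _ => by simp [Pi.add_apply, smul_add, mul_add]

lemma lc_v_smul (c : ℂ) (v : ℕ → ℂ) (l : ℕ →₀ ℂ) :
    Finsupp.linearCombination ℂ (c • v) l = c • Finsupp.linearCombination ℂ v l := by
  classical
  simp only [Finsupp.linearCombination_apply, Finsupp.smul_sum]
  exact Finsupp.sum_congr fun i _ => by simp [Pi.smul_apply, smul_comm, smul_eq_mul, mul_left_comm]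

/-- The nondegenerate pairing `p : T × R → ℂ`,
`p((ω,u),(w,ν)) = Σ_i ω(i)w(i) + Σ_i u(i)ν(i)`. -/
def pairB : TT →ₗ[ℂ] RR →ₗ[ℂ] ℂ :=
  LinearMap.mk₂ ℂ
    (fun x y => Finsupp.linearCombination ℂ x.1 y.1 + Finsupp.linearCombination ℂ y.2 x.2)
    (fun x x' y => by
      simp only [Prod.fst_add, Prod.snd_add, lc_v_add, map_add]; ring)
    (fun c x y => by
      simp only [Prod.smul_fst, Prod.smul_snd, lc_v_smul, map_smul, smul_add])
    (fun x y y' => by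
      simp only [Prod.fst_add, Prod.snd_add, lc_v_add, map_add]; ring)
    (fun c x y => by
      simp only [Prod.smul_fst, Prod.smul_snd, lc_v_smul, map_smul, smul_add])

/-- The Mackey-group condition on a pair of automorphisms:
`p(φ x, y) = p(x, φ̄ y)` for all `x ∈ T`, `y ∈ R`. -/
def IsMackey (φ : TT ≃ₗ[ℂ] TT) (ψ : RR ≃ₗ[ℂ] RR) : Prop :=
  ∀ (x : TT) (y : RR), pairB (φ x) y = pairB x (ψ y)

/-- `W^♯ = (ℕ→ℂ) × {0} ⊆ T`. -/
def Wsharp : Submodule ℂ TT := LinearMap.range (LinearMap.inl ℂ (ℕ → ℂ) (ℕ →₀ ℂ))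

/-- `U^♯ = {0} × (ℕ→ℂ) ⊆ R`. -/
def Usharp : Submodule ℂ RR := LinearMap.range (LinearMap.inr ℂ (ℕ →₀ ℂ) (ℕ → ℂ))

/-- `V = (ℕ→₀ℂ) × (ℕ→₀ℂ) ⊆ T`. -/
def Vsub : Submodule ℂ TT :=
  LinearMap.range
    ((Finsupp.lcoeFun : (ℕ →₀ ℂ) →ₗ[ℂ] (ℕ → ℂ)).prodMap
      (LinearMap.id : (ℕ →₀ ℂ) →ₗ[ℂ] (ℕ →₀ ℂ)))

/-- `W = (ℕ→₀ℂ) × {0} ⊆ T`. -/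
def Wsub : Submodule ℂ TT :=
  LinearMap.range
    ((LinearMap.inl ℂ (ℕ → ℂ) (ℕ →₀ ℂ)).comp
      (Finsupp.lcoeFun : (ℕ →₀ ℂ) →ₗ[ℂ] (ℕ → ℂ)))

/-- `π_U : T → (ℕ→₀ℂ)`, the second projection. -/
def piU : TT →ₗ[ℂ] (ℕ →₀ ℂ) := LinearMap.snd ℂ (ℕ → ℂ) (ℕ →₀ ℂ)

/-- `π_{W*} : R → (ℕ→₀ℂ)`, the first projection. -/
def piW : RR →ₗ[ℂ] (ℕ →₀ ℂ) := LinearMap.fst ℂ (ℕ →₀ ℂ) (ℕ → ℂ)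

/-- The degree `d(φ) = dim π_U(φ(W^♯)) − dim π_U(φ^{-1}(W^♯))`. -/
def deg (φ : TT ≃ₗ[ℂ] TT) : ℤ :=
  (Module.finrank ℂ ((Wsharp.map φ.toLinearMap).map piU) : ℤ) -
    (Module.finrank ℂ ((Wsharp.map φ.symm.toLinearMap).map piU) : ℤ)

/-- `span {(δ_i, 0) : i ≥ n} ⊆ T`. -/
def tailSpan (n : ℕ) : Submodule ℂ TT :=
  Submodule.span ℂ
    ((fun i => ((((Finsupp.single i (1 : ℂ)) : ℕ →₀ ℂ) : ℕ → ℂ), (0 : ℕ →₀ ℂ))) '' {i | n ≤ i})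

/-- `W'` is E-commensurable of index `k` with `W`:
`W' = G ⊕ span{(δ_i,0) : i ≥ n}` with `G ⊆ V` finite-dimensional of dimension `n + k`. -/
def Ecomm (W' : Submodule ℂ TT) (k : ℤ) : Prop :=
  ∃ (n : ℕ) (G : Submodule ℂ TT), G ≤ Vsub ∧ FiniteDimensional ℂ G ∧
    (Module.finrank ℂ G : ℤ) = (n : ℤ) + k ∧ Disjoint G (tailSpan n) ∧
    W' = G ⊔ tailSpan n

/-- `W'^⊥ = {y ∈ R : p(x,y) = 0 for all x ∈ W'}`. -/
def perpR (W' : Submodule ℂ TT) : Submodule ℂ RR :=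
  ⨅ x ∈ (W' : Set TT), LinearMap.ker (pairB x)

/-- `Y^⊥ = {x ∈ T : p(x,y) = 0 for all y ∈ Y}`. -/
def perpT (Y : Submodule ℂ RR) : Submodule ℂ TT :=
  ⨅ y ∈ (Y : Set RR), LinearMap.ker (pairB.flip y)

/-- The action `φ·W' = φ((W'^⊥)^⊥) ∩ V`. -/
def actOn (φ : TT ≃ₗ[ℂ] TT) (W' : Submodule ℂ TT) : Submodule ℂ TT :=
  ((perpT (perpR W')).map φ.toLinearMap) ⊓ Vsub

end


/-- The embedding of `V = (ℕ→₀ℂ) × (ℕ→₀ℂ)` into `T`. -/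
noncomputable def embV : ((ℕ →₀ ℂ) × (ℕ →₀ ℂ)) →ₗ[ℂ] TT :=
  (Finsupp.lcoeFun : (ℕ →₀ ℂ) →ₗ[ℂ] (ℕ → ℂ)).prodMap
    (LinearMap.id : (ℕ →₀ ℂ) →ₗ[ℂ] (ℕ →₀ ℂ))

namespace StmtAux

noncomputable section
open Module Submodule Finsupp

abbrev PV : Type := (ℕ →₀ ℂ) × (ℕ →₀ ℂ)

def eV (i : ℕ) : PV := (Finsupp.single i 1, 0)
def fV (i : ℕ) : PV := (0, Finsupp.single i 1)

/-- truncation of an element of `T` to the coordinates in `S`, as an element of `V`. -/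
def truncT (S : Finset ℕ) : TT →ₗ[ℂ] PV :=
  ∑ i ∈ S,
    ((LinearMap.toSpanSingleton ℂ PV (eV i)).comp
        ((LinearMap.proj i).comp (LinearMap.fst ℂ (ℕ → ℂ) (ℕ →₀ ℂ)))
     + (LinearMap.toSpanSingleton ℂ PV (fV i)).comp
        ((Finsupp.lapply i).comp (LinearMap.snd ℂ (ℕ → ℂ) (ℕ →₀ ℂ))))

lemma truncT_apply (S : Finset ℕ) (x : TT) :
    truncT S x = ∑ i ∈ S, (x.1 i • eV i + x.2 i • fV i) := by
  simp [truncT, LinearMap.sum_apply, LinearMap.toSpanSingleton_apply]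

variable (κ : PV ≃ₗ[ℂ] PV) (S : Finset ℕ)

def corr : TT →ₗ[ℂ] PV := (κ.toLinearMap - LinearMap.id) ∘ₗ truncT S

lemma corr_apply (x : TT) :
    corr κ S x = ∑ i ∈ S, (x.1 i • (κ (eV i) - eV i) + x.2 i • (κ (fV i) - fV i)) := by
  simp [corr, truncT_apply, map_sum, map_add, smul_sub, Finset.sum_add_distrib,
    Finset.sum_sub_distrib]

def Fixes : Prop := ∀ i ∉ S, κ (eV i) = eV i ∧ κ (fV i) = fV i

lemma fixes_symm (h : Fixes κ S) : Fixes κ.symm S := by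
  intro i hi
  constructor
  · conv_lhs => rw [← (h i hi).1]
    exact κ.symm_apply_apply _
  · conv_lhs => rw [← (h i hi).2]
    exact κ.symm_apply_apply _

lemma single_smul_eV (a : ℕ) (b : ℂ) :
    ((Finsupp.single a b : ℕ →₀ ℂ), (0 : ℕ →₀ ℂ)) = b • eV a := by
  simp [eV, Prod.smul_mk, Finsupp.smul_single]

lemma single_smul_fV (a : ℕ) (b : ℂ) :
    ((0 : ℕ →₀ ℂ), (Finsupp.single a b : ℕ →₀ ℂ)) = b • fV a := by
  simp [fV, Prod.smul_mk, Finsupp.smul_single]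

lemma corr_embV (hS : Fixes κ S) (v : PV) : corr κ S (embV v) = κ v - v := by
  have h : (corr κ S) ∘ₗ embV = κ.toLinearMap - LinearMap.id := by
    apply LinearMap.prod_ext
    · apply Finsupp.lhom_ext; intro a b
      simp only [LinearMap.comp_apply, LinearMap.inl_apply, LinearMap.sub_apply,
        LinearMap.id_apply, LinearEquiv.coe_coe]
      have hemb : embV ((Finsupp.single a b : ℕ →₀ ℂ), (0 : ℕ →₀ ℂ))
          = (((Finsupp.single a b : ℕ →₀ ℂ) : ℕ → ℂ), (0 : ℕ →₀ ℂ)) := rfl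
      rw [hemb, corr_apply]
      simp only [Finsupp.coe_zero, Pi.zero_apply, zero_smul, add_zero]
      have : ∀ i ∈ S, ((Finsupp.single a b : ℕ →₀ ℂ) : ℕ → ℂ) i • (κ (eV i) - eV i)
          = if a = i then b • (κ (eV i) - eV i) else 0 := by
        intro i _
        rw [Finsupp.single_apply, ite_smul, zero_smul]
      rw [Finset.sum_congr rfl this, Finset.sum_ite_eq]
      rw [single_smul_eV, map_smul]
      by_cases ha : a ∈ S
      · simp [ha, smul_sub]
      · simp [ha, (hS a ha).1]
    · apply Finsupp.lhom_ext; intro a b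
      simp only [LinearMap.comp_apply, LinearMap.inr_apply, LinearMap.sub_apply,
        LinearMap.id_apply, LinearEquiv.coe_coe]
      have hemb : embV ((0 : ℕ →₀ ℂ), (Finsupp.single a b : ℕ →₀ ℂ))
          = (((0 : ℕ →₀ ℂ) : ℕ → ℂ), (Finsupp.single a b : ℕ →₀ ℂ)) := rfl
      rw [hemb, corr_apply]
      simp only [Finsupp.coe_zero, Pi.zero_apply, zero_smul, zero_add]
      have : ∀ i ∈ S, (Finsupp.single a b : ℕ →₀ ℂ) i • (κ (fV i) - fV i)
          = if a = i then b • (κ (fV i) - fV i) else 0 := by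
        intro i _
        rw [Finsupp.single_apply, ite_smul, zero_smul]
      rw [Finset.sum_congr rfl this, Finset.sum_ite_eq]
      rw [single_smul_fV, map_smul]
      by_cases ha : a ∈ S
      · simp [ha, smul_sub]
      · simp [ha, (hS a ha).2]
  calc corr κ S (embV v) = ((corr κ S) ∘ₗ embV) v := rfl
    _ = κ v - v := by rw [h]; rfl

def hatL : TT →ₗ[ℂ] TT := LinearMap.id + embV ∘ₗ corr κ S

lemma hat_comp (hS : Fixes κ S) : (hatL κ S) ∘ₗ (hatL κ.symm S) = LinearMap.id := by
  apply LinearMap.ext; intro x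
  simp only [LinearMap.comp_apply, LinearMap.id_apply, hatL, LinearMap.add_apply, map_add,
    corr_embV κ S hS]
  simp only [corr, LinearMap.comp_apply, LinearMap.sub_apply, LinearMap.id_apply,
    LinearEquiv.coe_coe, map_sub, LinearEquiv.apply_symm_apply, map_add]
  abel

lemma hat_comp' (hS : Fixes κ S) : (hatL κ.symm S) ∘ₗ (hatL κ S) = LinearMap.id := by
  have := hat_comp κ.symm S (fixes_symm κ S hS)
  rwa [LinearEquiv.symm_symm] at this

def hatE (hS : Fixes κ S) : TT ≃ₗ[ℂ] TT :=
  LinearEquiv.ofLinear (hatL κ S) (hatL κ.symm S) (hat_comp κ S hS) (hat_comp' κ S hS)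

def eR (i : ℕ) : RR := (Finsupp.single i 1, 0)
def fR (i : ℕ) : RR := (0, ((Finsupp.single i 1 : ℕ →₀ ℂ) : ℕ → ℂ))

lemma lc_coe_single (i : ℕ) (c : ℂ) (l : ℕ →₀ ℂ) :
    Finsupp.linearCombination ℂ (((Finsupp.single i c : ℕ →₀ ℂ) : ℕ → ℂ)) l = l i * c := by
  classical
  rw [Finsupp.linearCombination_apply, Finsupp.sum]
  rw [Finset.sum_eq_single i
    (fun j _ hji => by simp [Finsupp.single_apply, (Ne.symm hji : i ≠ j)])
    (fun hi => by simp [Finsupp.notMem_support_iff.mp hi])]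
  simp [Finsupp.single_apply, smul_eq_mul, mul_comm]

lemma lc_zero_fun (l : ℕ →₀ ℂ) :
    Finsupp.linearCombination ℂ ((0 : ℕ → ℂ)) l = 0 := by
  rw [Finsupp.linearCombination_apply]
  simp

lemma pair_eR (x : TT) (i : ℕ) : pairB x (eR i) = x.1 i := by
  simp [pairB, eR, Finsupp.linearCombination_single, lc_zero_fun]

lemma pair_fR (x : TT) (i : ℕ) : pairB x (fR i) = x.2 i := by
  simp [pairB, fR, lc_coe_single]

lemma pair_embV_eV (y : RR) (i : ℕ) : pairB (embV (eV i)) y = y.1 i := by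
  have : embV (eV i) = ((((Finsupp.single i 1 : ℕ →₀ ℂ)) : ℕ → ℂ), (0 : ℕ →₀ ℂ)) := rfl
  rw [this]
  simp [pairB, lc_coe_single]

lemma pair_embV_fV (y : RR) (i : ℕ) : pairB (embV (fV i)) y = y.2 i := by
  have : embV (fV i) = ((((0 : ℕ →₀ ℂ)) : ℕ → ℂ), (Finsupp.single i 1 : ℕ →₀ ℂ)) := rfl
  rw [this]
  simp [pairB, Finsupp.linearCombination_single, lc_zero_fun, Finsupp.coe_zero]

def Ecorr : RR →ₗ[ℂ] RR :=
  ∑ i ∈ S,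
    ((LinearMap.toSpanSingleton ℂ RR (eR i)).comp (pairB (embV (κ (eV i) - eV i)))
     + (LinearMap.toSpanSingleton ℂ RR (fR i)).comp (pairB (embV (κ (fV i) - fV i))))

lemma pair_embV_corr (x : TT) (y : RR) :
    pairB (embV (corr κ S x)) y = pairB x (Ecorr κ S y) := by
  rw [corr_apply]
  rw [map_sum, map_sum, LinearMap.sum_apply]
  have hE : Ecorr κ S y = ∑ i ∈ S,
      ((pairB (embV (κ (eV i) - eV i)) y) • eR i
        + (pairB (embV (κ (fV i) - fV i)) y) • fR i) := by
    simp [Ecorr, LinearMap.sum_apply, LinearMap.toSpanSingleton_apply]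
  rw [hE, map_sum]
  refine Finset.sum_congr rfl fun i _ => ?_
  simp only [map_add, map_smul, LinearMap.add_apply, LinearMap.smul_apply, smul_eq_mul,
    pair_eR, pair_fR]
  ring

lemma pair_hatL (x : TT) (y : RR) :
    pairB (hatL κ S x) y = pairB x (((LinearMap.id + Ecorr κ S) : RR →ₗ[ℂ] RR) y) := by
  simp only [hatL, LinearMap.add_apply, LinearMap.id_apply, LinearMap.comp_apply, map_add,
    LinearMap.add_apply]
  rw [pair_embV_corr]

lemma nondeg_left (x x' : TT) (h : ∀ y, pairB x y = pairB x' y) : x = x' := by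
  have h1 : x.1 = x'.1 := funext fun i => by
    have := h (eR i); rwa [pair_eR, pair_eR] at this
  have h2 : x.2 = x'.2 := Finsupp.ext fun i => by
    have := h (fR i); rwa [pair_fR, pair_fR] at this
  exact Prod.ext h1 h2

lemma nondeg_right (y y' : RR) (h : ∀ v : PV, pairB (embV v) y = pairB (embV v) y') :
    y = y' := by
  have h1 : y.1 = y'.1 := Finsupp.ext fun i => by
    have := h (eV i); rwa [pair_embV_eV, pair_embV_eV] at this
  have h2 : y.2 = y'.2 := funext fun i => by
    have := h (fV i); rwa [pair_embV_fV, pair_embV_fV] at this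
  exact Prod.ext h1 h2

lemma Ecomp (hS : Fixes κ S) :
    (LinearMap.id + Ecorr κ S) ∘ₗ (LinearMap.id + Ecorr κ.symm S) = LinearMap.id := by
  apply LinearMap.ext; intro y
  apply nondeg_right; intro v
  simp only [LinearMap.comp_apply, LinearMap.id_apply]
  rw [← pair_hatL, ← pair_hatL]
  have : hatL κ.symm S (hatL κ S (embV v)) = embV v :=
    LinearMap.congr_fun (hat_comp' κ S hS) (embV v)
  rw [this]

lemma Ecomp' (hS : Fixes κ S) :
    (LinearMap.id + Ecorr κ.symm S) ∘ₗ (LinearMap.id + Ecorr κ S) = LinearMap.id := by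
  have := Ecomp κ.symm S (fixes_symm κ S hS)
  rwa [LinearEquiv.symm_symm] at this

def barE (hS : Fixes κ S) : RR ≃ₗ[ℂ] RR :=
  LinearEquiv.ofLinear (LinearMap.id + Ecorr κ S) (LinearMap.id + Ecorr κ.symm S)
    (Ecomp κ S hS) (Ecomp' κ S hS)

lemma isMackey_hat (hS : Fixes κ S) : IsMackey (hatE κ S hS) (barE κ S hS) := by
  intro x y
  rw [hatE, barE, LinearEquiv.ofLinear_apply, LinearEquiv.ofLinear_apply]
  exact pair_hatL κ S x y

lemma hat_restrict (hS : Fixes κ S) (v : PV) : hatE κ S hS (embV v) = embV (κ v) := by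
  rw [hatE, LinearEquiv.ofLinear_apply]
  show embV v + embV (corr κ S (embV v)) = embV (κ v)
  rw [corr_embV κ S hS, map_sub]
  abel

lemma unique_pair (hS : Fixes κ S) (φ : TT ≃ₗ[ℂ] TT) (ψ : RR ≃ₗ[ℂ] RR)
    (hM : IsMackey φ ψ) (hr : ∀ v : PV, φ (embV v) = embV (κ v)) :
    φ = hatE κ S hS ∧ ψ = barE κ S hS := by
  have hψ : ψ = barE κ S hS := by
    apply LinearEquiv.ext; intro y
    apply nondeg_right; intro v
    calc pairB (embV v) (ψ y) = pairB (φ (embV v)) y := (hM _ y).symm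
      _ = pairB ((hatE κ S hS) (embV v)) y := by rw [hr, hat_restrict]
      _ = pairB (embV v) ((barE κ S hS) y) := isMackey_hat κ S hS _ y
  refine ⟨?_, hψ⟩
  apply LinearEquiv.ext; intro x
  apply nondeg_left; intro y
  calc pairB (φ x) y = pairB x (ψ y) := hM x y
    _ = pairB x ((barE κ S hS) y) := by rw [hψ]
    _ = pairB ((hatE κ S hS) x) y := (isMackey_hat κ S hS x y).symm

/-! ### degree -/

def p2 : PV →ₗ[ℂ] (ℕ →₀ ℂ) := LinearMap.snd ℂ (ℕ →₀ ℂ) (ℕ →₀ ℂ)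

def Wv : Submodule ℂ PV := Submodule.span ℂ (eV '' (S : Set ℕ))

def Vv : Submodule ℂ PV :=
  (Finsupp.supported ℂ ℂ (S : Set ℕ)).prod (Finsupp.supported ℂ ℂ (S : Set ℕ))

lemma Wv_eq : Wv S = (Finsupp.supported ℂ ℂ (S : Set ℕ)).prod ⊥ := by
  rw [Wv]
  have h : eV '' (S : Set ℕ)
      = (LinearMap.inl ℂ (ℕ →₀ ℂ) (ℕ →₀ ℂ)) '' ((fun i => Finsupp.single i (1 : ℂ)) '' (S : Set ℕ)) := by
    rw [Set.image_image]; rfl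
  rw [h, ← Submodule.map_span, ← Finsupp.supported_eq_span_single, Submodule.map_inl]

lemma fv_span : Submodule.span ℂ (fV '' (S : Set ℕ))
    = Submodule.prod ⊥ (Finsupp.supported ℂ ℂ (S : Set ℕ)) := by
  have h : fV '' (S : Set ℕ)
      = (LinearMap.inr ℂ (ℕ →₀ ℂ) (ℕ →₀ ℂ)) '' ((fun i => Finsupp.single i (1 : ℂ)) '' (S : Set ℕ)) := by
    rw [Set.image_image]; rfl
  rw [h, ← Submodule.map_span, ← Finsupp.supported_eq_span_single, Submodule.map_inr]

lemma ker_p2 : LinearMap.ker p2 = (⊤ : Submodule ℂ (ℕ →₀ ℂ)).prod ⊥ := by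
  ext x
  simp [p2, Submodule.mem_prod, LinearMap.mem_ker]

lemma Vv_inf : Vv S ⊓ LinearMap.ker p2 = Wv S := by
  rw [Wv_eq, Vv]
  ext x
  simp only [Submodule.mem_inf, Submodule.mem_prod, LinearMap.mem_ker, Submodule.mem_bot,
    p2, LinearMap.snd_apply]
  constructor
  · rintro ⟨⟨h1, -⟩, h2⟩; exact ⟨h1, h2⟩
  · rintro ⟨h1, h2⟩; exact ⟨⟨h1, h2 ▸ Submodule.zero_mem _⟩, h2⟩

lemma Vv_span : Vv S = Submodule.span ℂ (eV '' (S : Set ℕ) ∪ fV '' (S : Set ℕ)) := by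
  rw [Submodule.span_union, ← Wv, Wv_eq, fv_span, Vv]
  rw [LinearMap.prod_eq_sup_map, Submodule.map_inl, Submodule.map_inr]

def GoodS : Prop := ∀ i ∈ S, κ (eV i) ∈ Vv S ∧ κ (fV i) ∈ Vv S

lemma mem_Vv (x : PV) (h1 : x.1.support ⊆ S) (h2 : x.2.support ⊆ S) : x ∈ Vv S :=
  ⟨(Finsupp.mem_supported ℂ _).2 (Finset.coe_subset.2 h1),
   (Finsupp.mem_supported ℂ _).2 (Finset.coe_subset.2 h2)⟩

lemma eV_mem_Vv {i : ℕ} (hiS : i ∈ S) : eV i ∈ Vv S :=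
  mem_Vv S _ (Finset.Subset.trans Finsupp.support_single_subset
      (Finset.singleton_subset_iff.2 hiS)) (by simp [eV])

lemma fV_mem_Vv {i : ℕ} (hiS : i ∈ S) : fV i ∈ Vv S :=
  mem_Vv S _ (by simp [fV]) (Finset.Subset.trans Finsupp.support_single_subset
      (Finset.singleton_subset_iff.2 hiS))

lemma map_Vv (hG : GoodS κ S) : (Vv S).map κ.toLinearMap ≤ Vv S := by
  conv_lhs => rw [Vv_span]
  rw [Submodule.map_span, Submodule.span_le]
  rintro _ ⟨z, hz, rfl⟩
  rcases hz with ⟨i, hi, rfl⟩ | ⟨i, hi, rfl⟩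
  · exact (hG i hi).1
  · exact (hG i hi).2

lemma hatL_snd (ω : ℕ → ℂ) :
    (hatL κ S (ω, 0)).2 = ∑ i ∈ S, ω i • (κ (eV i)).2 := by
  have h1 : hatL κ S (ω, 0) = (ω, 0) + embV (corr κ S (ω, 0)) := rfl
  have h2 : (embV (corr κ S (ω, 0))).2 = (corr κ S (ω, 0)).2 := rfl
  rw [h1, Prod.snd_add, h2, corr_apply]
  simp only [Finsupp.coe_zero, Pi.zero_apply, zero_smul, add_zero]
  rw [Prod.snd_sum]
  simp [eV, Prod.smul_snd, Prod.snd_sub, smul_sub]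

lemma hatL_image (hS : Fixes κ S) :
    ((Wsharp.map (hatL κ S)).map piU)
      = Submodule.map (p2 ∘ₗ κ.toLinearMap) (Wv S) := by
  have hL : (Wsharp.map (hatL κ S)).map piU
      = LinearMap.range (piU ∘ₗ (hatL κ S) ∘ₗ LinearMap.inl ℂ (ℕ → ℂ) (ℕ →₀ ℂ)) := by
    rw [Wsharp, LinearMap.range_comp, LinearMap.range_comp]
  have hR : Submodule.map (p2 ∘ₗ κ.toLinearMap) (Wv S)
      = Submodule.span ℂ ((fun i => (κ (eV i)).2) '' (S : Set ℕ)) := by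
    rw [Wv, Submodule.map_span, Set.image_image]; rfl
  rw [hL, hR]
  apply le_antisymm
  · rintro _ ⟨ω, rfl⟩
    have : (piU ∘ₗ (hatL κ S) ∘ₗ LinearMap.inl ℂ (ℕ → ℂ) (ℕ →₀ ℂ)) ω
        = ∑ i ∈ S, ω i • (κ (eV i)).2 := by
      simp only [LinearMap.comp_apply, LinearMap.inl_apply, piU, LinearMap.snd_apply]
      exact hatL_snd κ S ω
    rw [this]
    exact Submodule.sum_mem _ fun i hi =>
      Submodule.smul_mem _ _ (Submodule.subset_span ⟨i, hi, rfl⟩)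
  · rw [Submodule.span_le]
    rintro _ ⟨i, hi, rfl⟩
    refine ⟨((Finsupp.single i 1 : ℕ →₀ ℂ) : ℕ → ℂ), ?_⟩
    simp only [LinearMap.comp_apply, LinearMap.inl_apply, piU, LinearMap.snd_apply]
    rw [hatL_snd κ S]
    rw [Finset.sum_eq_single i
      (fun j _ hji => by simp [Finsupp.single_apply, (Ne.symm hji : i ≠ j)])
      (fun h => absurd hi h)]
    simp [Finsupp.single_apply]

lemma rank_nullity {M N : Type} [AddCommGroup M] [Module ℂ M] [AddCommGroup N] [Module ℂ N]
    (W : Submodule ℂ M) [FiniteDimensional ℂ W] (f : M →ₗ[ℂ] N) :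
    finrank ℂ (W.map f) + finrank ℂ ↥(W ⊓ LinearMap.ker f) = finrank ℂ W := by
  have h := LinearMap.finrank_range_add_finrank_ker (f.domRestrict W)
  rw [LinearMap.range_domRestrict, LinearMap.ker_domRestrict] at h
  have e : Submodule.comap W.subtype (LinearMap.ker f)
      = Submodule.comap W.subtype (W ⊓ LinearMap.ker f) := by
    rw [Submodule.comap_inf, Submodule.comap_subtype_self, top_inf_eq]
  rw [e] at h
  have e2 := LinearEquiv.finrank_eq
    (Submodule.comapSubtypeEquivOfLe (inf_le_left : W ⊓ LinearMap.ker f ≤ W))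
  omega

lemma Wv_le_Vv : Wv S ≤ Vv S := by
  rw [← Vv_inf]; exact inf_le_left

lemma inf_ker_eq (hG : GoodS κ S) :
    Wv S ⊓ LinearMap.ker (p2 ∘ₗ κ.toLinearMap)
      = Wv S ⊓ Submodule.comap κ.toLinearMap (Wv S) := by
  rw [LinearMap.ker_comp]
  apply le_antisymm
  · rintro x ⟨hxW, hxk⟩
    refine ⟨hxW, ?_⟩
    have hxV : x ∈ Vv S := Wv_le_Vv S hxW
    have h2 : κ x ∈ Vv S := map_Vv κ S hG ⟨x, hxV, rfl⟩
    have h3 : κ x ∈ Vv S ⊓ LinearMap.ker p2 := ⟨h2, hxk⟩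
    rw [Vv_inf] at h3
    exact h3
  · refine le_inf inf_le_left ?_
    refine le_trans inf_le_right (Submodule.comap_mono ?_)
    rw [← Vv_inf]
    exact inf_le_right

lemma inf_comap_finrank :
    finrank ℂ ↥(Wv S ⊓ Submodule.comap κ.toLinearMap (Wv S))
      = finrank ℂ ↥(Wv S ⊓ Submodule.comap κ.symm.toLinearMap (Wv S)) := by
  rw [show κ.toLinearMap = (κ : PV →ₗ[ℂ] PV) from rfl,
    show κ.symm.toLinearMap = (κ.symm : PV →ₗ[ℂ] PV) from rfl,
    Submodule.comap_equiv_eq_map_symm κ (Wv S),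
    Submodule.comap_equiv_eq_map_symm κ.symm (Wv S), LinearEquiv.symm_symm]
  rw [← LinearEquiv.finrank_map_eq κ (Wv S ⊓ (Wv S).map (κ.symm : PV →ₗ[ℂ] PV))]
  rw [Submodule.map_inf (κ : PV →ₗ[ℂ] PV) κ.injective]
  have hmm : (((Wv S).map (κ.symm : PV →ₗ[ℂ] PV)).map (κ : PV →ₗ[ℂ] PV)) = Wv S :=
    (Submodule.map_symm_eq_iff κ).mp rfl
  rw [hmm, inf_comm]

lemma deg_hat (hS : Fixes κ S) (hG : GoodS κ S) (hG' : GoodS κ.symm S) :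
    deg (hatE κ S hS) = 0 := by
  haveI : FiniteDimensional ℂ (Wv S) :=
    FiniteDimensional.span_of_finite ℂ ((S : Set ℕ).toFinite.image _)
  have hA : (Wsharp.map (hatE κ S hS).toLinearMap).map piU
      = Submodule.map (p2 ∘ₗ κ.toLinearMap) (Wv S) := by
    rw [show (hatE κ S hS).toLinearMap = hatL κ S from rfl, hatL_image κ S hS]
  have hB : (Wsharp.map (hatE κ S hS).symm.toLinearMap).map piU
      = Submodule.map (p2 ∘ₗ κ.symm.toLinearMap) (Wv S) := by
    rw [show (hatE κ S hS).symm.toLinearMap = hatL κ.symm S from rfl,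
      hatL_image κ.symm S (fixes_symm κ S hS)]
  have r1 := rank_nullity (Wv S) (p2 ∘ₗ κ.toLinearMap)
  have r2 := rank_nullity (Wv S) (p2 ∘ₗ κ.symm.toLinearMap)
  rw [inf_ker_eq κ S hG] at r1
  rw [inf_ker_eq κ.symm S hG'] at r2
  have r3 := inf_comap_finrank κ S
  rw [deg, hA, hB]
  omega

end
end StmtAux
/-- Every automorphism `κ` of `V` fixing all but finitely many standard basis vectors extends
uniquely to a pair `(κ̂,κ̄) ∈ G(T,R)`, and the extension has degree `0`. -/
theorem stmt2 (κ : ((ℕ →₀ ℂ) × (ℕ →₀ ℂ)) ≃ₗ[ℂ] ((ℕ →₀ ℂ) × (ℕ →₀ ℂ)))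
    (hfin : {i : ℕ |
        κ (Finsupp.single i 1, 0) ≠ (Finsupp.single i 1, 0) ∨
        κ (0, Finsupp.single i 1) ≠ (0, Finsupp.single i 1)}.Finite) :
    (∃! a : (TT ≃ₗ[ℂ] TT) × (RR ≃ₗ[ℂ] RR),
      IsMackey a.1 a.2 ∧ ∀ v : (ℕ →₀ ℂ) × (ℕ →₀ ℂ), a.1 (embV v) = embV (κ v)) ∧
    (∀ a : (TT ≃ₗ[ℂ] TT) × (RR ≃ₗ[ℂ] RR),
      IsMackey a.1 a.2 → (∀ v : (ℕ →₀ ℂ) × (ℕ →₀ ℂ), a.1 (embV v) = embV (κ v)) →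
      deg a.1 = 0) := by
  classical
  set S0 : Finset ℕ := hfin.toFinset with hS0def
  have hfix0 : ∀ i ∉ S0, κ (StmtAux.eV i) = StmtAux.eV i ∧ κ (StmtAux.fV i) = StmtAux.fV i := by
    intro i hi
    rw [hS0def, Set.Finite.mem_toFinset, Set.mem_setOf_eq] at hi
    push_neg at hi
    exact ⟨hi.1, hi.2⟩
  set S : Finset ℕ := S0 ∪ S0.biUnion (fun i =>
      (((κ (StmtAux.eV i)).1.support ∪ (κ (StmtAux.eV i)).2.support) ∪
       ((κ (StmtAux.fV i)).1.support ∪ (κ (StmtAux.fV i)).2.support)) ∪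
      (((κ.symm (StmtAux.eV i)).1.support ∪ (κ.symm (StmtAux.eV i)).2.support) ∪
       ((κ.symm (StmtAux.fV i)).1.support ∪ (κ.symm (StmtAux.fV i)).2.support))) with hSdef
  have hS0S : S0 ⊆ S := Finset.subset_union_left
  have hS : StmtAux.Fixes κ S := fun i hi => hfix0 i (fun h => hi (hS0S h))
  have hfix0' : ∀ i ∉ S0,
      κ.symm (StmtAux.eV i) = StmtAux.eV i ∧ κ.symm (StmtAux.fV i) = StmtAux.fV i := by
    intro i hi
    obtain ⟨h1, h2⟩ := hfix0 i hi
    constructor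
    · conv_lhs => rw [← h1]
      exact κ.symm_apply_apply _
    · conv_lhs => rw [← h2]
      exact κ.symm_apply_apply _
  have hG : StmtAux.GoodS κ S := by
    intro i hiS
    by_cases hi0 : i ∈ S0
    · have mk : ∀ j, j ∈
          ((((κ (StmtAux.eV i)).1.support ∪ (κ (StmtAux.eV i)).2.support) ∪
           ((κ (StmtAux.fV i)).1.support ∪ (κ (StmtAux.fV i)).2.support)) ∪
          (((κ.symm (StmtAux.eV i)).1.support ∪ (κ.symm (StmtAux.eV i)).2.support) ∪
           ((κ.symm (StmtAux.fV i)).1.support ∪ (κ.symm (StmtAux.fV i)).2.support)))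
          → j ∈ S := fun j hj =>
        Finset.mem_union_right _ (Finset.mem_biUnion.2 ⟨i, hi0, hj⟩)
      constructor
      · refine StmtAux.mem_Vv S _ (fun j hj => mk j ?_) (fun j hj => mk j ?_) <;>
          (simp only [Finset.mem_union]; tauto)
      · refine StmtAux.mem_Vv S _ (fun j hj => mk j ?_) (fun j hj => mk j ?_) <;>
          (simp only [Finset.mem_union]; tauto)
    · obtain ⟨h1, h2⟩ := hfix0 i hi0
      rw [h1, h2]
      exact ⟨StmtAux.eV_mem_Vv S hiS, StmtAux.fV_mem_Vv S hiS⟩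
  have hG' : StmtAux.GoodS κ.symm S := by
    intro i hiS
    by_cases hi0 : i ∈ S0
    · have mk : ∀ j, j ∈
          ((((κ (StmtAux.eV i)).1.support ∪ (κ (StmtAux.eV i)).2.support) ∪
           ((κ (StmtAux.fV i)).1.support ∪ (κ (StmtAux.fV i)).2.support)) ∪
          (((κ.symm (StmtAux.eV i)).1.support ∪ (κ.symm (StmtAux.eV i)).2.support) ∪
           ((κ.symm (StmtAux.fV i)).1.support ∪ (κ.symm (StmtAux.fV i)).2.support)))
          → j ∈ S := fun j hj =>
        Finset.mem_union_right _ (Finset.mem_biUnion.2 ⟨i, hi0, hj⟩)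
      constructor
      · refine StmtAux.mem_Vv S _ (fun j hj => mk j ?_) (fun j hj => mk j ?_) <;>
          (simp only [Finset.mem_union]; tauto)
      · refine StmtAux.mem_Vv S _ (fun j hj => mk j ?_) (fun j hj => mk j ?_) <;>
          (simp only [Finset.mem_union]; tauto)
    · obtain ⟨h1, h2⟩ := hfix0' i hi0
      rw [h1, h2]
      exact ⟨StmtAux.eV_mem_Vv S hiS, StmtAux.fV_mem_Vv S hiS⟩
  constructor
  · refine ⟨(StmtAux.hatE κ S hS, StmtAux.barE κ S hS),
      ⟨StmtAux.isMackey_hat κ S hS, fun v => StmtAux.hat_restrict κ S hS v⟩, ?_⟩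
    rintro ⟨φ, ψ⟩ ⟨hM, hr⟩
    obtain ⟨h1, h2⟩ := StmtAux.unique_pair κ S hS φ ψ hM hr
    exact Prod.ext h1 h2
  · intro a hM hr
    obtain ⟨h1, -⟩ := StmtAux.unique_pair κ S hS a.1 a.2 hM hr
    rw [h1]
    exact StmtAux.deg_hat κ S hS hG hG'
end

section
/- For every (φ,φ̄) ∈ G(T,R), the linear maps μ : (ℕ→ℂ) → (ℕ→₀ℂ), ω ↦ π_U(φ(ω,0)), and ν : (ℕ→ℂ) → (ℕ→₀ℂ), ν₀ ↦ π_{W*}(φ̄(0,ν₀)), have finite-dimensional ranges, and dim(range μ) = dim(range ν). -/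
open Module Submodule

/-! The Mackey condition, tested on `(ω, 0)` and `(0, ν₀)`, says that `μ` and `ν` are adjoint for
the pairing `⟨u, ω⟩ = Σ u(i) ω(i)` of `ℕ →₀ ℂ` with `ℕ → ℂ`. Adjointness makes `μ` a matrix map
`ω ↦ (⟨r_i, ω⟩)_i` with finitely supported rows `r_i = ν(δ_i)`, and only finitely many rows can be
nonzero: otherwise choose `t ∈ ℂ` off the countably many root sets of the polynomials
`Σ_j r_i(j) X^j`, and `μ((t^j)_j)` has infinite support. Hence `range μ`, and symmetrically
`range ν`, is finite-dimensional. Identifying `ℕ → ℂ` with the dual of `ℕ →₀ ℂ` turns `ν` into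
the dual map of `μ`, and a linear map and its dual have ranges of equal dimension. -/

section Duality

variable {K V₁ V₂ W₁ W₂ : Type*} [Field K]
  [AddCommGroup V₁] [Module K V₁] [AddCommGroup V₂] [Module K V₂]
  [AddCommGroup W₁] [Module K W₁] [AddCommGroup W₂] [Module K W₂]

theorem LinearMap.finrank_range_eq_of_comp_eq_dualMap {f : V₁ →ₗ[K] V₂} {g : W₁ →ₗ[K] W₂}
    {J : W₂ →ₗ[K] Module.Dual K V₁} (hJ : Function.Injective J) (e : W₁ ≃ₗ[K] Module.Dual K V₂)
    (hfg : J ∘ₗ g = f.dualMap ∘ₗ e.toLinearMap) :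
    finrank K (LinearMap.range g) = finrank K (LinearMap.range f) := by
  calc finrank K (LinearMap.range g)
      = finrank K ((LinearMap.range g).map J) :=
        (Submodule.equivMapOfInjective J hJ _).finrank_eq
    _ = finrank K (LinearMap.range f.dualMap) := by
        rw [← LinearMap.range_comp, hfg, LinearMap.range_comp_of_range_eq_top _ e.range]
    _ = finrank K (LinearMap.range f) := f.finrank_range_dualMap_eq_finrank_range

end Duality

namespace Finsupp

variable {K : Type*} [Field K]

theorem linearCombination_pi_single_one (i : ℕ) (u : ℕ →₀ K) :
    linearCombination K (Pi.single i (1 : K)) u = u i := by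
  classical
  simp [linearCombination_apply, Pi.single_apply, eq_comm]

theorem linearCombination_pow (t : K) (u : ℕ →₀ K) :
    linearCombination K (fun j => t ^ j) u
      = (Polynomial.ofFinsupp (AddMonoidAlgebra.ofCoeff u)).eval t := by
  classical
  rw [linearCombination_apply, sum, Polynomial.eval_eq_sum, Polynomial.sum,
    Polynomial.support_ofFinsupp]
  exact Finset.sum_congr rfl fun j _ => by
    simp [Polynomial.coeff_ofFinsupp, smul_eq_mul, mul_comm]

theorem finite_setOf_ne_zero_of_forall_finite [Uncountable K] (r : ℕ → ℕ →₀ K)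
    (H : ∀ ω : ℕ → K, {i | linearCombination K ω (r i) ≠ 0}.Finite) :
    {i | r i ≠ 0}.Finite := by
  by_contra hinf
  let poly (i : ℕ) : Polynomial K := Polynomial.ofFinsupp (AddMonoidAlgebra.ofCoeff (r i))
  have hroots : (⋃ i ∈ {i | r i ≠ 0}, {t | (poly i).IsRoot t}).Countable :=
    Set.Countable.biUnion (Set.to_countable _) fun i hi =>
      (Polynomial.finite_setOfPred_isRoot
        (by simpa [poly, Polynomial.ofFinsupp_eq_zero] using hi)).countable
  obtain ⟨t, ht⟩ : ∃ t, t ∉ ⋃ i ∈ {i | r i ≠ 0}, {t | (poly i).IsRoot t} := by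
    by_contra! h
    exact Set.not_countable_univ (Set.eq_univ_of_forall h ▸ hroots)
  refine hinf ((H fun j => t ^ j).subset fun i hi => ?_)
  have : ¬ (poly i).IsRoot t := fun hroot => ht (Set.mem_biUnion hi hroot)
  simpa [linearCombination_pow] using this

theorem llift_apply_eq_linearCombination (ω : ℕ → K) (u : ℕ →₀ K) :
    llift K K K ℕ ω u = linearCombination K ω u := by
  rw [llift_apply, lift_apply, linearCombination_apply]

variable {f g : (ℕ → K) →ₗ[K] (ℕ →₀ K)}

theorem finiteDimensional_range_of_adjoint [Uncountable K]
    (hfg : ∀ ω ν, linearCombination K ν (f ω) = linearCombination K ω (g ν)) :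
    FiniteDimensional K (LinearMap.range f) := by
  let r (i : ℕ) : ℕ →₀ K := g (Pi.single i 1)
  have hf (ω : ℕ → K) (i : ℕ) : f ω i = linearCombination K ω (r i) := by
    rw [← linearCombination_pi_single_one i (f ω), hfg]
  have hS := finite_setOf_ne_zero_of_forall_finite r fun ω =>
    (f ω).support.finite_toSet.subset fun i hi => by simpa [hf] using hi
  have hle : LinearMap.range f ≤ supported K K {i | r i ≠ 0} := by
    rintro _ ⟨ω, rfl⟩ i hi
    by_contra h
    exact mem_support_iff.mp hi (by rw [hf, not_not.mp h, map_zero])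
  have := hS.to_subtype
  have : FiniteDimensional K (supported K K {i | r i ≠ 0}) :=
    (supportedEquivFinsupp _).symm.finiteDimensional
  exact Submodule.finiteDimensional_of_le hle

theorem finrank_range_eq_of_adjoint
    (hfg : ∀ ω ν, linearCombination K ν (f ω) = linearCombination K ω (g ν)) :
    finrank K (LinearMap.range g) = finrank K (LinearMap.range f) := by
  refine LinearMap.finrank_range_eq_of_comp_eq_dualMap (J := (llift K K K ℕ).toLinearMap.flip)
    (fun u v huv => ?_) (llift K K K ℕ) ?_
  · ext i
    simpa only [LinearMap.flip_apply, LinearEquiv.coe_coe, llift_apply_eq_linearCombination,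
      linearCombination_pi_single_one] using LinearMap.congr_fun huv (Pi.single i 1)
  · ext ν ω
    simp only [LinearMap.comp_apply, LinearMap.flip_apply, LinearEquiv.coe_coe,
      LinearMap.dualMap_apply, llift_apply_eq_linearCombination]
    exact (hfg ω ν).symm

end Finsupp

/-- For every `(φ,φ̄) ∈ G(T,R)`, the maps `μ : ω ↦ π_U(φ(ω,0))` and
`ν : ν₀ ↦ π_{W*}(φ̄(0,ν₀))` have finite-dimensional ranges of the same dimension. -/
theorem stmt3 (φ : TT ≃ₗ[ℂ] TT) (ψ : RR ≃ₗ[ℂ] RR) (h : IsMackey φ ψ) :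
    FiniteDimensional ℂ
      (LinearMap.range (piU ∘ₗ φ.toLinearMap ∘ₗ LinearMap.inl ℂ (ℕ → ℂ) (ℕ →₀ ℂ))) ∧
    FiniteDimensional ℂ
      (LinearMap.range (piW ∘ₗ ψ.toLinearMap ∘ₗ LinearMap.inr ℂ (ℕ →₀ ℂ) (ℕ → ℂ))) ∧
    Module.finrank ℂ
        (LinearMap.range (piU ∘ₗ φ.toLinearMap ∘ₗ LinearMap.inl ℂ (ℕ → ℂ) (ℕ →₀ ℂ)))
      = Module.finrank ℂ
        (LinearMap.range (piW ∘ₗ ψ.toLinearMap ∘ₗ LinearMap.inr ℂ (ℕ →₀ ℂ) (ℕ → ℂ))) := by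
  set μ := piU ∘ₗ φ.toLinearMap ∘ₗ LinearMap.inl ℂ (ℕ → ℂ) (ℕ →₀ ℂ)
  set ν := piW ∘ₗ ψ.toLinearMap ∘ₗ LinearMap.inr ℂ (ℕ →₀ ℂ) (ℕ → ℂ)
  have hadj (ω ν₀ : ℕ → ℂ) :
      Finsupp.linearCombination ℂ ν₀ (μ ω) = Finsupp.linearCombination ℂ ω (ν ν₀) := by
    simpa [μ, ν, pairB, piU, piW] using h (ω, 0) (0, ν₀)
  have : Uncountable ℂ := Set.not_countable_univ_iff.mp not_countable_complex
  exact ⟨Finsupp.finiteDimensional_range_of_adjoint hadj,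
    Finsupp.finiteDimensional_range_of_adjoint fun ν₀ ω => (hadj ω ν₀).symm,
    (Finsupp.finrank_range_eq_of_adjoint hadj).symm⟩
end

section
/- For every (φ,φ̄) ∈ G(T,R), the subspace φ·W := φ(W^♯) ∩ V of V is E-commensurable of index k with W for some integer k. -/
open Module Submodule

/-!
By the Mackey condition the block `ω ↦ (φ (ω, 0)).2` of `φ` is the transpose of the block
`ν ↦ (φ̄ (0, ν)).1` of `φ̄`. Both take values in finitely supported sequences, and since `ℂ` is
uncountable such a transpose pair kills almost all coordinates. Hence the second components of `φ(W^♯)` live in the first `m`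
coordinates, and (applied to `φ⁻¹`) `φ(W^♯) ∩ V` contains `span {(δᵢ, 0) : i ≥ n}`. Restricting
to the first `n` and `m` coordinates then embeds a complement of this span into `ℂⁿ × ℂᵐ`.
-/

open Polynomial in
/-- With `ω i = t ^ i` the pairing with `v j` is the polynomial with coefficients `v j` evaluated
at `t`, so it suffices to pick `t` outside the countably many roots of these polynomials. -/
theorem Finsupp.exists_linearCombination_ne_zero {K ι : Type*} [CommRing K] [IsDomain K]
    [Uncountable K] [Countable ι] (v : ι → ℕ →₀ K) :
    ∃ ω : ℕ → K, ∀ j, v j ≠ 0 → linearCombination K ω (v j) ≠ 0 := by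
  let p : ι → K[X] := fun j => ⟨AddMonoidAlgebra.ofCoeff (v j)⟩
  set roots := ⋃ j, {t | v j ≠ 0 ∧ (p j).IsRoot t}
  have hroots : roots.Countable :=
    Set.countable_iUnion fun j => by
      by_cases hj : v j = 0
      · simp [hj]
      · refine (finite_setOfPred_isRoot ?_).countable.mono fun t ht => ht.2
        simpa [p, ofFinsupp_eq_zero] using hj
  obtain ⟨t, ht⟩ := (Set.ne_univ_iff_exists_notMem roots).1
    fun h => Set.not_countable_univ (h ▸ hroots : (Set.univ : Set K).Countable)
  refine ⟨fun i => t ^ i, fun j hj hroot => ht (Set.mem_iUnion.2 ⟨j, hj, ?_⟩)⟩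
  rw [IsRoot, eval_eq_sum, Polynomial.sum_def, support_ofFinsupp, ← hroot,
    linearCombination_apply, Finsupp.sum]
  exact Finset.sum_congr rfl fun i _ => by simp [p, smul_eq_mul]

theorem Finsupp.linearCombination_pi_single {K : Type*} [Semiring K] (j : ℕ) (u : ℕ →₀ K) :
    linearCombination K (Pi.single j 1) u = u j := by
  simp [linearCombination_apply, Pi.single_apply, Finsupp.sum_ite_eq']

/-- The sequence `ω` pairing nontrivially with every nonzero `B δⱼ` has `C ω j ≠ 0` for all
those `j`, and `C ω` has finite support. -/
theorem exists_forall_ge_apply_pi_single_eq_zero {K : Type*} [CommRing K] [IsDomain K]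
    [Uncountable K] (C B : (ℕ → K) → ℕ →₀ K)
    (hCB : ∀ ω ν, Finsupp.linearCombination K ν (C ω) = Finsupp.linearCombination K ω (B ν)) :
    ∃ m, ∀ j, m ≤ j → B (Pi.single j 1) = 0 := by
  have hC : ∀ ω j, C ω j = Finsupp.linearCombination K ω (B (Pi.single j 1)) := fun ω j => by
    rw [← hCB, Finsupp.linearCombination_pi_single]
  obtain ⟨ω, hω⟩ := Finsupp.exists_linearCombination_ne_zero fun j => B (Pi.single j 1)
  obtain ⟨m, hm⟩ := (C ω).support.finite_toSet.bddAbove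
  refine ⟨m + 1, fun j hj => by_contra fun hB => ?_⟩
  have hjm : j ≤ m := hm (Finsupp.mem_support_iff.2 (hC ω j ▸ hω j hB))
  omega

instance : Uncountable ℂ := Complex.ofReal_injective.uncountable

lemma pairB_apply (x : TT) (y : RR) :
    pairB x y = Finsupp.linearCombination ℂ x.1 y.1 + Finsupp.linearCombination ℂ y.2 x.2 :=
  rfl

namespace IsMackey

variable {φ : TT ≃ₗ[ℂ] TT} {ψ : RR ≃ₗ[ℂ] RR}

lemma symm (h : IsMackey φ ψ) : IsMackey φ.symm ψ.symm := fun x y => by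
  simpa using (h (φ.symm x) (ψ.symm y)).symm

lemma linearCombination_snd_inl (h : IsMackey φ ψ) (ω ν : ℕ → ℂ) :
    Finsupp.linearCombination ℂ ν (φ (ω, 0)).2 = Finsupp.linearCombination ℂ ω (ψ (0, ν)).1 := by
  simpa [pairB_apply] using h (ω, 0) (0, ν)

lemma exists_snd_apply_inl_eq_zero (h : IsMackey φ ψ) :
    ∃ m, ∀ ω j, m ≤ j → (φ (ω, 0)).2 j = 0 := by
  obtain ⟨m, hm⟩ := exists_forall_ge_apply_pi_single_eq_zero (fun ω => (φ (ω, 0)).2)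
    (fun ν => (ψ (0, ν)).1) h.linearCombination_snd_inl
  refine ⟨m, fun ω j hj => ?_⟩
  rw [← Finsupp.linearCombination_pi_single, h.linearCombination_snd_inl, hm j hj, map_zero]

lemma exists_symm_snd_apply_inl_pi_single_eq_zero (h : IsMackey φ ψ) :
    ∃ n, ∀ i, n ≤ i → (φ.symm (Pi.single i 1, 0)).2 = 0 :=
  exists_forall_ge_apply_pi_single_eq_zero (fun ν => (ψ.symm (0, ν)).1)
    (fun ω => (φ.symm (ω, 0)).2) fun ν ω => (h.symm.linearCombination_snd_inl ω ν).symm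

end IsMackey

theorem Submodule.exists_finiteDimensional_disjoint_sup_eq {K M E : Type*} [DivisionRing K]
    [AddCommGroup M] [Module K M] [AddCommGroup E] [Module K E] [FiniteDimensional K E]
    {A W : Submodule K M} (hAW : A ≤ W) (F : M →ₗ[K] E) (hF : W ⊓ LinearMap.ker F ≤ A) :
    ∃ G : Submodule K M, G ≤ W ∧ FiniteDimensional K G ∧ Disjoint G A ∧ W = G ⊔ A := by
  obtain ⟨c, hc⟩ := Submodule.exists_isCompl A
  refine ⟨W ⊓ c, inf_le_left, ?_, hc.disjoint.symm.mono_left inf_le_right, ?_⟩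
  · refine FiniteDimensional.of_injective (F.comp (W ⊓ c).subtype) fun x y hxy => ?_
    have hker : (x - y : M) ∈ W ⊓ LinearMap.ker F :=
      ⟨W.sub_mem x.2.1 y.2.1, by simpa [sub_eq_zero] using hxy⟩
    have hxy' : (x - y : M) ∈ A ⊓ c := ⟨hF hker, c.sub_mem x.2.2 y.2.2⟩
    rw [hc.inf_eq_bot, Submodule.mem_bot, sub_eq_zero] at hxy'
    exact Subtype.ext hxy'
  · rw [sup_comm, inf_comm, ← sup_inf_assoc_of_le c hAW, hc.sup_eq_top, top_inf_eq]

lemma mem_Vsub_iff {x : TT} : x ∈ Vsub ↔ ∃ a : ℕ →₀ ℂ, ⇑a = x.1 :=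
  ⟨fun ⟨⟨a, _⟩, hx⟩ => ⟨a, congrArg Prod.fst hx⟩, fun ⟨a, ha⟩ => ⟨(a, x.2), Prod.ext ha rfl⟩⟩

lemma mem_tailSpan {n : ℕ} {w : ℕ →₀ ℂ} (hw : ∀ i < n, w i = 0) : (⇑w, 0) ∈ tailSpan n := by
  have htail : tailSpan n = (Finsupp.supported ℂ ℂ {i | n ≤ i}).map
      ((LinearMap.inl ℂ (ℕ → ℂ) (ℕ →₀ ℂ)).comp Finsupp.lcoeFun) := by
    rw [tailSpan, Finsupp.supported_eq_span_single, Submodule.map_span, ← Set.image_comp]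
    rfl
  rw [htail]
  exact ⟨w, fun i hi => (le_of_not_gt fun hin => Finsupp.mem_support_iff.1 hi (hw i hin) :
    n ≤ i), rfl⟩

noncomputable def window (n m : ℕ) : TT →ₗ[ℂ] (Fin n → ℂ) × (Fin m → ℂ) :=
  (LinearMap.funLeft ℂ ℂ Fin.val).prodMap ((LinearMap.funLeft ℂ ℂ Fin.val).comp Finsupp.lcoeFun)

lemma mem_ker_window {n m : ℕ} {x : TT} :
    x ∈ LinearMap.ker (window n m) ↔ (∀ i < n, x.1 i = 0) ∧ ∀ j < m, x.2 j = 0 := by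
  simp [window, LinearMap.funLeft, funext_iff, Fin.forall_iff]

section

variable {φ : TT ≃ₗ[ℂ] TT} {n m : ℕ}

lemma tailSpan_le_map_Wsharp_inf_Vsub (hn : ∀ i, n ≤ i → (φ.symm (Pi.single i 1, 0)).2 = 0) :
    tailSpan n ≤ Wsharp.map φ.toLinearMap ⊓ Vsub := by
  rw [tailSpan, Submodule.span_le]
  rintro _ ⟨i, hi, rfl⟩
  refine ⟨⟨φ.symm (Pi.single i 1, 0), ⟨(φ.symm (Pi.single i 1, 0)).1, ?_⟩, ?_⟩,
    mem_Vsub_iff.2 ⟨_, rfl⟩⟩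
  · exact Prod.ext rfl (hn i hi).symm
  · simp [Finsupp.single_eq_pi_single]

lemma map_Wsharp_inf_Vsub_inf_ker_window_le (hm : ∀ ω j, m ≤ j → (φ (ω, 0)).2 j = 0) :
    Wsharp.map φ.toLinearMap ⊓ Vsub ⊓ LinearMap.ker (window n m) ≤ tailSpan n := by
  rintro x ⟨⟨⟨_, ⟨ω, rfl⟩, rfl⟩, hV⟩, hker⟩
  obtain ⟨a, ha⟩ := mem_Vsub_iff.1 hV
  obtain ⟨hlow₁, hlow₂⟩ := mem_ker_window.1 hker
  have hsnd : (φ (ω, 0)).2 = 0 := Finsupp.ext fun j =>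
    if hj : j < m then hlow₂ j hj else hm ω j (not_lt.1 hj)
  have hx : φ (ω, 0) = (⇑a, 0) := Prod.ext ha.symm hsnd
  simp only [LinearMap.inl_apply, LinearEquiv.coe_coe, hx] at hlow₁ ⊢
  exact mem_tailSpan hlow₁

end

/-- For every `(φ,φ̄) ∈ G(T,R)`, the subspace `φ·W = φ(W^♯) ∩ V` is
E-commensurable of some index `k` with `W`. -/
theorem stmt4 (φ : TT ≃ₗ[ℂ] TT) (ψ : RR ≃ₗ[ℂ] RR) (h : IsMackey φ ψ) :
    ∃ k : ℤ, Ecomm ((Wsharp.map φ.toLinearMap) ⊓ Vsub) k := by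
  obtain ⟨m, hm⟩ := h.exists_snd_apply_inl_eq_zero
  obtain ⟨n, hn⟩ := h.exists_symm_snd_apply_inl_pi_single_eq_zero
  obtain ⟨G, hGW, hG, hdisj, hsup⟩ := Submodule.exists_finiteDimensional_disjoint_sup_eq
    (tailSpan_le_map_Wsharp_inf_Vsub hn) (window n m) (map_Wsharp_inf_Vsub_inf_ker_window_le hm)
  exact ⟨Module.finrank ℂ G - n, n, G, hGW.trans inf_le_right, hG, by ring, hdisj, hsup⟩
end

section
/- The degree map d : G(T,R) → ℤ is a surjective group homomorphism; in particular G⁰ := {(φ,φ̄) ∈ G(T,R) : d(φ) = 0} is a normal subgroup of G(T,R), and the cosets of G⁰ in G(T,R) are exactly the nonempty sets G^k := {(φ,φ̄) ∈ G(T,R) : d(φ) = k}, k ∈ ℤ. -/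
open Module Submodule

noncomputable section

/-- The Mackey group `G(T,R)` of pairs `(φ, φ̄)`, as a subgroup of the product of the
automorphism group of `T` with the opposite of the automorphism group of `R`
(so that composition is componentwise). -/
def Mackey : Subgroup ((TT ≃ₗ[ℂ] TT) × (RR ≃ₗ[ℂ] RR)ᵐᵒᵖ) where
  carrier := {a | IsMackey a.1 a.2.unop}
  one_mem' := fun _ _ => rfl
  mul_mem' := by
    intro a b ha hb
    intro x y
    simp only [Prod.fst_mul, Prod.snd_mul]
    have h1 : (a.1 * b.1) x = a.1 (b.1 x) := rfl
    have h2 : ((a.2 * b.2).unop) y = b.2.unop (a.2.unop y) := rfl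
    rw [h1, h2, ha, hb]
  inv_mem' := by
    intro a ha
    intro x y
    have := ha (a.1⁻¹ x) (a.2.unop⁻¹ y)
    have h1 : a.1 (a.1⁻¹ x) = x := a.1.apply_symm_apply x
    have h2 : a.2.unop (a.2.unop⁻¹ y) = y := a.2.unop.apply_symm_apply y
    simp only [Prod.fst_inv, Prod.snd_inv]
    have h4 : (a.2⁻¹).unop = a.2.unop⁻¹ := rfl
    rw [h4]
    rw [h1, h2] at this
    exact this.symm

end

/-!
Write `W := W^♯`. Since `ker π_U = W`, the number `dim π_U(φ W)` is the dimension of `φ W` modulo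
`W`, and after applying `φ`, `dim π_U(φ⁻¹ W)` is the dimension of `W` modulo `φ W`. Hence `d(φ)` is
the relative dimension `[φ W : W] = dim (φ W / (φ W ∩ W)) - dim (W / (φ W ∩ W))`.

Both numbers are finite for a Mackey pair `(φ, φ̄)`: the `j`-th coordinate of `ω ↦ π_U φ(ω, 0)`
is the pairing of `ω` with the finitely supported vector `π_{W*} φ̄(0, δ_j)`, so it is continuous
on the Baire space `ℂ^ℕ`, and Baire's theorem bounds the supports of all the images uniformly.

Relative dimension is additive on commensurable subspaces, `[A : C] = [A : B] + [B : C]`, and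
invariant under automorphisms, so `d(φ χ) = [φ χ W : φ W] + [φ W : W] = d(χ) + d(φ)`. The shift
`(ω, u) ↦ ((ω (i+1))ᵢ, ω 0 • δ₀ + (u shifted by one))` is a Mackey automorphism of degree `1`, so
`d` is onto, and `G⁰ = ker d` has the fibres of `d` as cosets.
-/

namespace Submodule

variable {K V V' N : Type*} [Field K] [AddCommGroup V] [Module K V] [AddCommGroup V']
  [Module K V'] [AddCommGroup N] [Module K N]

theorem ker_factor {B D : Submodule K V} (h : D ≤ B) :
    LinearMap.ker (factor h) = B.map D.mkQ := by
  rw [factor, mapQ, ker_liftQ, LinearMap.ker_comp, ker_mkQ, comap_id]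

theorem map_mkQ_inf_map_mkQ (A : Submodule K V) {B D : Submodule K V} (h : D ≤ B) :
    A.map D.mkQ ⊓ B.map D.mkQ = (A ⊓ B).map D.mkQ := by
  rw [map_inf_eq_map_inf_comap, comap_map_eq, ker_mkQ, sup_of_le_left h]

theorem rank_map_mkQ_eq_add (A : Submodule K V) {B D : Submodule K V} (h : D ≤ B) :
    Module.rank K (A.map D.mkQ) =
      Module.rank K (A.map B.mkQ) + Module.rank K ((A ⊓ B).map D.mkQ) := by
  set f := (factor h).domRestrict (A.map D.mkQ)
  have hrange : LinearMap.range f = A.map B.mkQ := by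
    rw [LinearMap.range_domRestrict, ← map_comp, factor_comp_mk]
  have hker : (LinearMap.ker f).map (A.map D.mkQ).subtype = (A ⊓ B).map D.mkQ := by
    rw [LinearMap.ker_domRestrict, map_comap_subtype, ker_factor, map_mkQ_inf_map_mkQ A h]
  rw [← LinearMap.rank_range_add_rank_ker f, hrange, ← hker,
    (equivMapOfInjective _ (injective_subtype _) _).rank_eq]

theorem rank_map_mkQ_le (A : Submodule K V) {B D : Submodule K V} (h : D ≤ B) :
    Module.rank K (A.map B.mkQ) ≤ Module.rank K (A.map D.mkQ) := by
  rw [← factor_comp_mk h, map_comp]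
  exact rank_map_le _ _

theorem rank_map_mkQ_of_inf_le (A : Submodule K V) {B D : Submodule K V} (hDB : D ≤ B)
    (hD : A ⊓ B ≤ D) : Module.rank K (A.map D.mkQ) = Module.rank K (A.map B.mkQ) := by
  have hbot : (A ⊓ B).map D.mkQ = ⊥ := LinearMap.le_ker_iff_map.1 (by rwa [ker_mkQ])
  rw [rank_map_mkQ_eq_add A hDB, hbot, rank_bot, add_zero]

theorem finrank_map_mkQ_eq_add (A : Submodule K V) {B D : Submodule K V} (h : D ≤ B)
    (hB : Module.rank K (A.map B.mkQ) < Cardinal.aleph0)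
    (hD : Module.rank K ((A ⊓ B).map D.mkQ) < Cardinal.aleph0) :
    finrank K (A.map D.mkQ) = finrank K (A.map B.mkQ) + finrank K ((A ⊓ B).map D.mkQ) := by
  rw [finrank, rank_map_mkQ_eq_add A h, Cardinal.toNat_add hB hD]
  rfl

/-- `A.map B.mkQ` is the image of `A` in `V ⧸ B`, a copy of `A / (A ⊓ B)`. -/
def Commensurable (A B : Submodule K V) : Prop :=
  Module.Finite K (A.map B.mkQ) ∧ Module.Finite K (B.map A.mkQ)

noncomputable def relDim (A B : Submodule K V) : ℤ :=
  finrank K (A.map B.mkQ) - finrank K (B.map A.mkQ)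

theorem relDim_eq_sub {A B D : Submodule K V} (hDA : D ≤ A) (hDB : D ≤ B)
    (hAB : Module.rank K (A.map B.mkQ) < Cardinal.aleph0)
    (hBA : Module.rank K (B.map A.mkQ) < Cardinal.aleph0)
    (hD : Module.rank K ((A ⊓ B).map D.mkQ) < Cardinal.aleph0) :
    relDim A B = finrank K (A.map D.mkQ) - finrank K (B.map D.mkQ) := by
  have hA := finrank_map_mkQ_eq_add A hDB hAB hD
  have hB := finrank_map_mkQ_eq_add B hDA hBA (inf_comm A B ▸ hD)
  rw [inf_comm B A] at hB
  rw [relDim, hA, hB]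
  push_cast
  ring

theorem relDim_add_relDim {A B C : Submodule K V} (hAB : A.Commensurable B)
    (hBC : B.Commensurable C) : relDim A B + relDim B C = relDim A C := by
  obtain ⟨_, _⟩ := hAB
  obtain ⟨_, _⟩ := hBC
  set D := A ⊓ B ⊓ C
  have hDA : D ≤ A := inf_le_left.trans inf_le_left
  have hDB : D ≤ B := inf_le_left.trans inf_le_right
  have hDC : D ≤ C := inf_le_right
  -- each `(X ⊓ Y).map D.mkQ` has the rank of `X ⊓ Y` modulo the third subspace
  have fin_AB : Module.rank K ((A ⊓ B).map D.mkQ) < Cardinal.aleph0 := by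
    rw [rank_map_mkQ_of_inf_le _ hDC le_rfl]
    exact (rank_mono (map_mono inf_le_right)).trans_lt (rank_lt_aleph0 K _)
  have fin_BC : Module.rank K ((B ⊓ C).map D.mkQ) < Cardinal.aleph0 := by
    rw [rank_map_mkQ_of_inf_le _ hDA (by rw [inf_comm, ← inf_assoc])]
    exact (rank_mono (map_mono inf_le_left)).trans_lt (rank_lt_aleph0 K _)
  have fin_AC : Module.rank K ((A ⊓ C).map D.mkQ) < Cardinal.aleph0 := by
    rw [rank_map_mkQ_of_inf_le _ hDB (by rw [inf_assoc, inf_comm C, ← inf_assoc])]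
    exact (rank_mono (map_mono inf_le_left)).trans_lt (rank_lt_aleph0 K _)
  have fin_A_C : Module.rank K (A.map C.mkQ) < Cardinal.aleph0 := by
    refine (rank_map_mkQ_le A hDC).trans_lt ?_
    rw [rank_map_mkQ_eq_add A hDB]
    exact Cardinal.add_lt_aleph0 (rank_lt_aleph0 K _) fin_AB
  have fin_C_A : Module.rank K (C.map A.mkQ) < Cardinal.aleph0 := by
    refine (rank_map_mkQ_le C hDA).trans_lt ?_
    rw [rank_map_mkQ_eq_add C hDB, inf_comm C B]
    exact Cardinal.add_lt_aleph0 (rank_lt_aleph0 K _) fin_BC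
  rw [relDim_eq_sub hDA hDB (rank_lt_aleph0 K _) (rank_lt_aleph0 K _) fin_AB,
    relDim_eq_sub hDB hDC (rank_lt_aleph0 K _) (rank_lt_aleph0 K _) fin_BC,
    relDim_eq_sub hDA hDC fin_A_C fin_C_A fin_AC]
  ring

noncomputable def mapMkQEquivMap (e : V ≃ₗ[K] V') (A B : Submodule K V) :
    A.map B.mkQ ≃ₗ[K] (A.map e.toLinearMap).map (B.map e.toLinearMap).mkQ :=
  ((Quotient.equiv B (B.map e.toLinearMap) e rfl).submoduleMap (A.map B.mkQ)).trans
    (LinearEquiv.ofEq _ _ (by rw [← map_comp, ← map_comp]; rfl))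

theorem Commensurable.map_equiv {A B : Submodule K V} (h : A.Commensurable B)
    (e : V ≃ₗ[K] V') : (A.map e.toLinearMap).Commensurable (B.map e.toLinearMap) :=
  ⟨h.1.equiv (mapMkQEquivMap e A B), h.2.equiv (mapMkQEquivMap e B A)⟩

theorem relDim_map_equiv (e : V ≃ₗ[K] V') (A B : Submodule K V) :
    relDim (A.map e.toLinearMap) (B.map e.toLinearMap) = relDim A B := by
  rw [relDim, relDim, (mapMkQEquivMap e A B).finrank_eq, (mapMkQEquivMap e B A).finrank_eq]

theorem map_map_symm (e : V ≃ₗ[K] V') (S : Submodule K V') :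
    (S.map e.symm.toLinearMap).map e.toLinearMap = S :=
  (map_symm_eq_iff e).1 rfl

noncomputable def mapMkQKerEquiv (f : V →ₗ[K] N) (S : Submodule K V) :
    S.map (LinearMap.ker f).mkQ ≃ₗ[K] S.map f :=
  (equivMapOfInjective _ (LinearMap.ker_eq_bot.1 (ker_liftQ_eq_bot' _ f rfl)) _).trans
    (LinearEquiv.ofEq _ _ (by rw [← map_comp, liftQ_mkQ]))

end Submodule

theorem LinearMap.exists_range_le_supported_Iio {𝕜 E : Type*} [NontriviallyNormedField 𝕜]
    [AddCommGroup E] [Module 𝕜 E] [TopologicalSpace E] [ContinuousAdd E] [ContinuousSMul 𝕜 E]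
    [BaireSpace E] (C : E →ₗ[𝕜] ℕ →₀ 𝕜) (hC : ∀ j, Continuous fun x => C x j) :
    ∃ N, LinearMap.range C ≤ Finsupp.supported 𝕜 𝕜 (Set.Iio N) := by
  set S : ℕ → Submodule 𝕜 E := fun N => (Finsupp.supported 𝕜 𝕜 (Set.Iio N)).comap C
  have hS : ∀ N, (S N : Set E) = ⋂ j ∈ Set.Ici N, {x | C x j = 0} := by
    intro N
    ext x
    simp [S, Finsupp.mem_supported', not_lt]
  have hclosed : ∀ N, IsClosed (S N : Set E) := fun N => by
    rw [hS]
    exact isClosed_biInter fun j _ => isClosed_eq (hC j) continuous_const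
  have hcover : ⋃ N, (S N : Set E) = Set.univ := by
    refine Set.eq_univ_of_forall fun x => Set.mem_iUnion.2 ?_
    obtain ⟨N, hN⟩ := (C x).support.bddAbove
    exact ⟨N + 1, fun j hj => Nat.lt_succ_of_le (hN hj)⟩
  obtain ⟨N, hN⟩ := nonempty_interior_of_iUnion_of_closed hclosed hcover
  exact ⟨N, LinearMap.range_le_iff_comap.2 ((S N).eq_top_of_nonempty_interior' hN)⟩

theorem LinearMap.finite_range_of_continuous_apply {𝕜 E : Type*} [NontriviallyNormedField 𝕜]
    [AddCommGroup E] [Module 𝕜 E] [TopologicalSpace E] [ContinuousAdd E] [ContinuousSMul 𝕜 E]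
    [BaireSpace E] (C : E →ₗ[𝕜] ℕ →₀ 𝕜) (hC : ∀ j, Continuous fun x => C x j) :
    Module.Finite 𝕜 (LinearMap.range C) := by
  obtain ⟨N, hN⟩ := C.exists_range_le_supported_Iio hC
  have : Module.Finite 𝕜 (Finsupp.supported 𝕜 𝕜 (Set.Iio N)) :=
    Module.Finite.equiv (Finsupp.supportedEquivFinsupp (Set.Iio N)).symm
  exact Submodule.finiteDimensional_of_le hN

theorem pairB_inl (ω : ℕ → ℂ) (y : RR) :
    pairB (ω, 0) y = Finsupp.linearCombination ℂ ω y.1 := by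
  simp [pairB]

theorem pairB_single_inr (x : TT) (j : ℕ) : pairB x (0, Pi.single j 1) = x.2 j := by
  simp [pairB]

theorem finite_map_piU_map_Wsharp (a : Mackey) :
    Module.Finite ℂ ((Wsharp.map a.val.1.toLinearMap).map piU) := by
  set C := piU ∘ₗ a.val.1.toLinearMap ∘ₗ LinearMap.inl ℂ (ℕ → ℂ) (ℕ →₀ ℂ)
  have hC : ∀ ω j, C ω j = Finsupp.linearCombination ℂ ω (a.val.2.unop (0, Pi.single j 1)).1 :=
    fun ω j => by rw [← pairB_inl, ← a.2, pairB_single_inr]; rfl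
  have hcont : ∀ j, Continuous fun ω => C ω j := fun j => by
    simp only [hC, Finsupp.linearCombination_apply, Finsupp.sum]
    fun_prop
  rw [Wsharp, ← LinearMap.range_comp, ← LinearMap.range_comp]
  exact C.finite_range_of_continuous_apply hcont

theorem ker_piU : LinearMap.ker piU = Wsharp := LinearMap.ker_snd ℂ _ _

theorem finite_map_mkQ_Wsharp_of_finite_map_piU {S : Submodule ℂ TT}
    (h : Module.Finite ℂ (S.map piU)) : Module.Finite ℂ (S.map Wsharp.mkQ) :=
  ker_piU ▸ h.equiv (Submodule.mapMkQKerEquiv piU S).symm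

theorem commensurable_map_Wsharp (a : Mackey) :
    (Wsharp.map a.val.1.toLinearMap).Commensurable Wsharp := by
  refine ⟨finite_map_mkQ_Wsharp_of_finite_map_piU (finite_map_piU_map_Wsharp a), ?_⟩
  have h : Module.Finite ℂ ((Wsharp.map a.val.1.symm.toLinearMap).map Wsharp.mkQ) :=
    finite_map_mkQ_Wsharp_of_finite_map_piU (finite_map_piU_map_Wsharp a⁻¹)
  have := h.equiv (Submodule.mapMkQEquivMap a.val.1 _ Wsharp)
  rwa [Submodule.map_map_symm] at this

theorem deg_eq_relDim (φ : TT ≃ₗ[ℂ] TT) :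
    deg φ = Submodule.relDim (Wsharp.map φ.toLinearMap) Wsharp := by
  rw [deg, Submodule.relDim, ← (Submodule.mapMkQKerEquiv piU _).finrank_eq,
    ← (Submodule.mapMkQKerEquiv piU _).finrank_eq, ker_piU,
    (Submodule.mapMkQEquivMap φ (Wsharp.map φ.symm.toLinearMap) Wsharp).finrank_eq,
    Submodule.map_map_symm]

theorem deg_mul (a b : Mackey) :
    deg ((a * b : Mackey) : (TT ≃ₗ[ℂ] TT) × (RR ≃ₗ[ℂ] RR)ᵐᵒᵖ).1 = deg a.val.1 + deg b.val.1 := by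
  have hmap : Wsharp.map ((a * b : Mackey) : (TT ≃ₗ[ℂ] TT) × (RR ≃ₗ[ℂ] RR)ᵐᵒᵖ).1.toLinearMap =
      (Wsharp.map b.val.1.toLinearMap).map a.val.1.toLinearMap :=
    Submodule.map_comp _ _ _
  rw [deg_eq_relDim, deg_eq_relDim, deg_eq_relDim, hmap,
    ← Submodule.relDim_add_relDim ((commensurable_map_Wsharp b).map_equiv a.val.1)
      (commensurable_map_Wsharp a), Submodule.relDim_map_equiv, add_comm]

noncomputable def degHom : Mackey →* Multiplicative ℤ :=
  MonoidHom.mk' (fun a => Multiplicative.ofAdd (deg a.val.1)) fun a b => by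
    rw [deg_mul, ofAdd_add]

noncomputable def shift : TT ≃ₗ[ℂ] TT where
  toFun x := (fun i => x.1 (i + 1), Finsupp.single 0 (x.1 0) + x.2.mapDomain Nat.succ)
  invFun x :=
    (fun i => Nat.casesOn i (x.2 0) x.1, x.2.comapDomain Nat.succ Nat.succ_injective.injOn)
  map_add' x y := Prod.ext rfl <| by
    simp only [Prod.fst_add, Prod.snd_add, Pi.add_apply, Finsupp.single_add, Finsupp.mapDomain_add]
    abel
  map_smul' c x := Prod.ext rfl <| by simp [Finsupp.mapDomain_smul]
  left_inv x := by
    ext i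
    · cases i <;> simp [Finsupp.mapDomain_of_notMem_range]
    · simp [Finsupp.mapDomain_apply Nat.succ_injective]
  right_inv x := by
    ext i
    · rfl
    · cases i <;>
        simp [Finsupp.mapDomain_of_notMem_range, Finsupp.mapDomain_apply Nat.succ_injective]

noncomputable def shiftDual : RR ≃ₗ[ℂ] RR :=
  (LinearEquiv.prodComm ℂ (ℕ →₀ ℂ) (ℕ → ℂ)).trans
    (shift.trans (LinearEquiv.prodComm ℂ (ℕ → ℂ) (ℕ →₀ ℂ)))

theorem isMackey_shift : IsMackey shift shiftDual := by
  rintro ⟨ω, u⟩ ⟨w, ν⟩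
  simp only [pairB, shift, shiftDual, LinearEquiv.coe_mk, LinearMap.coe_mk, AddHom.coe_mk,
    LinearMap.mk₂_apply, map_add, Finsupp.linearCombination_single, smul_eq_mul,
    Finsupp.linearCombination_mapDomain, Function.comp_def, LinearEquiv.trans_apply,
    LinearEquiv.prodComm_apply, Prod.swap_prod_mk]
  ring

noncomputable def shiftMackey : Mackey := ⟨(shift, MulOpposite.op shiftDual), isMackey_shift⟩

theorem deg_shift : deg shift = 1 := by
  have h1 : (Wsharp.map shift.toLinearMap).map piU = LinearMap.range (Finsupp.lsingle 0) := by
    have hcomp : piU ∘ₗ shift.toLinearMap ∘ₗ LinearMap.inl ℂ (ℕ → ℂ) (ℕ →₀ ℂ) =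
        Finsupp.lsingle 0 ∘ₗ LinearMap.proj 0 := by
      ext ω : 1
      simp [piU, shift]
    rw [Wsharp, ← LinearMap.range_comp, ← LinearMap.range_comp, hcomp,
      LinearMap.range_comp_of_range_eq_top _
        (LinearMap.range_eq_top.2 (Function.surjective_eval 0))]
  have h2 : (Wsharp.map shift.symm.toLinearMap).map piU = ⊥ := by
    rw [Wsharp, ← LinearMap.range_comp, ← LinearMap.range_comp, LinearMap.range_eq_bot]
    ext ω : 1
    simp [piU, shift]
  rw [deg, h1, h2, LinearMap.finrank_range_of_inj (Finsupp.single_injective 0), finrank_self,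
    finrank_bot]
  rfl

theorem deg_zpow_shiftMackey (k : ℤ) : deg (shiftMackey ^ k).val.1 = k := by
  simpa [degHom, shiftMackey, deg_shift] using
    congrArg Multiplicative.toAdd (map_zpow degHom shiftMackey k)

open Pointwise in
set_option synthInstance.maxHeartbeats 1000000 in
/-- The degree is a surjective group homomorphism `G(T,R) → ℤ`; `G⁰` is a normal subgroup
whose cosets are exactly the (nonempty) fibers `G^k` of the degree. -/
theorem stmt11 :
    (∀ a b : Mackey, deg ((a * b : Mackey) : (TT ≃ₗ[ℂ] TT) × (RR ≃ₗ[ℂ] RR)ᵐᵒᵖ).1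
        = deg a.val.1 + deg b.val.1) ∧
    (∀ k : ℤ, ∃ a : Mackey, deg a.val.1 = k) ∧
    (∃ G0 : Subgroup Mackey, G0.Normal ∧ (∀ a : Mackey, a ∈ G0 ↔ deg a.val.1 = 0) ∧
      ∀ a : Mackey, a • (G0 : Set Mackey) = {b : Mackey | deg b.val.1 = deg a.val.1}) := by
  refine ⟨deg_mul, fun k => ⟨shiftMackey ^ k, deg_zpow_shiftMackey k⟩,
    degHom.ker, degHom.normal_ker, fun a => ?_, fun a => ?_⟩
  · rw [MonoidHom.mem_ker]
    exact Multiplicative.ofAdd.injective.eq_iff' rfl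
  · ext b
    rw [mem_leftCoset_iff, SetLike.mem_coe, MonoidHom.mem_ker, map_mul, map_inv, inv_mul_eq_one,
      Set.mem_ofPred_eq, eq_comm]
    exact Multiplicative.ofAdd.injective.eq_iff
end
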